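/- Let x and y be vertices of G such that the unique shortest path SP(x,y) from x to y in G exists. Let e_i and e_j be edges of G, let p be the unique shortest path from x to y in G − e_i, and let q be the unique shortest path from x to y in G − e_j. If both p and q are edge-disjoint from SP(x,y), then p = q. -/

import Mathlib

/-- `p` is a (simple) directed path from `u` to `v` using only edges in `E`,
encoded as its list of vertices. -/
def IsDipath {V : Type*} (E : Set (V × V)) (u v : V) (p : List V) : Prop :=
  p.Nodup ∧ p.head? = some u ∧ p.getLast? = some v ∧
    p.Chain' (fun a b => (a, b) ∈ E)

/-- The list of (directed) edges of a path given by its list of vertices. -/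
def pathEdges {V : Type*} (p : List V) : List (V × V) := p.zip p.tail

/-- The cost (length) of a path: the sum of the costs of its edges. -/
def pathCost {V : Type*} (cost : V × V → ℝ) (p : List V) : ℝ :=
  ((pathEdges p).map cost).sum

/-- `p` is a shortest (minimum-cost) path from `u` to `v` in the digraph with edge set `E`. -/
def IsShortestDipath {V : Type*} (E : Set (V × V)) (cost : V × V → ℝ)
    (u v : V) (p : List V) : Prop :=
  IsDipath E u v p ∧ ∀ q, IsDipath E u v q → pathCost cost p ≤ pathCost cost q

/-!
Let `S` be the edge set of `sp`. If a removed edge `e` is off `sp`, then `sp` survives in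
`G − e` and is still shortest there, so uniqueness makes the replacement path equal to `sp`;
as it is edge-disjoint from `sp`, `sp` has no edges, so the other removed edge is off `sp`
as well and both replacement paths equal `sp`. Otherwise both removed edges lie on `sp`; then
`p` and `q` avoid all of `S`, so both are shortest in `G − S ⊆ G − eᵢ, G − eⱼ`, and uniqueness
in `G − S` gives `p = q`.
-/

theorem List.isChain_iff_forall_mem_zip_tail {α : Type*} {R : α → α → Prop} {l : List α} :
    l.IsChain R ↔ ∀ ε ∈ l.zip l.tail, R ε.1 ε.2 := by
  induction l using List.twoStepInduction with
  | nil | singleton => simp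
  | cons_cons a b t _ ih => simp_all [List.isChain_cons_cons]

section Dipath

variable {V : Type*} {E E' F : Set (V × V)} {cost : V × V → ℝ} {u v : V} {p : List V}

theorem isDipath_iff : IsDipath E u v p ↔
    p.Nodup ∧ p.head? = some u ∧ p.getLast? = some v ∧ ∀ ε ∈ pathEdges p, ε ∈ E :=
  and_congr_right' <| and_congr_right' <| and_congr_right' List.isChain_iff_forall_mem_zip_tail

theorem IsDipath.mem_of_mem_pathEdges (h : IsDipath E u v p) {ε : V × V}
    (hε : ε ∈ pathEdges p) : ε ∈ E :=
  (isDipath_iff.mp h).2.2.2 ε hε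

theorem isDipath_diff_iff :
    IsDipath (E \ F) u v p ↔ IsDipath E u v p ∧ ∀ ε ∈ pathEdges p, ε ∉ F := by
  simp only [isDipath_iff, Set.mem_sdiff]
  grind

theorem IsDipath.mono (hE : E ⊆ E') (h : IsDipath E u v p) : IsDipath E' u v p := by
  rw [isDipath_iff] at h ⊢
  exact ⟨h.1, h.2.1, h.2.2.1, fun _ hε => hE (h.2.2.2 _ hε)⟩

theorem IsShortestDipath.of_subset (h : IsShortestDipath E cost u v p) (hE : E' ⊆ E)
    (hp : IsDipath E' u v p) : IsShortestDipath E' cost u v p :=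
  ⟨hp, fun _ hq => h.2 _ (hq.mono hE)⟩

theorem IsShortestDipath.diff (h : IsShortestDipath E cost u v p)
    (hF : ∀ ε ∈ pathEdges p, ε ∉ F) : IsShortestDipath (E \ F) cost u v p :=
  h.of_subset Set.sdiff_subset (isDipath_diff_iff.mpr ⟨h.1, hF⟩)

end Dipath

theorem stmt6_general {V : Type*}
    (E : Set (V × V)) (cost : V × V → ℝ)
    (huniq : ∀ F ⊆ E, ∀ u v : V, ∀ p q : List V,
      IsShortestDipath (E \ F) cost u v p → IsShortestDipath (E \ F) cost u v q → p = q)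
    (x y : V) (ei ej : V × V) (hei : ei ∈ E) (hej : ej ∈ E)
    (sp : List V) (hsp : IsShortestDipath E cost x y sp)
    (p q : List V)
    (hp : IsShortestDipath (E \ {ei}) cost x y p)
    (hq : IsShortestDipath (E \ {ej}) cost x y q)
    (hpdisj : ∀ ε ∈ pathEdges p, ε ∉ pathEdges sp)
    (hqdisj : ∀ ε ∈ pathEdges q, ε ∉ pathEdges sp) :
    p = q := by
  set S : Set (V × V) := {ε | ε ∈ pathEdges sp}
  have eq_sp : ∀ e ∈ E, ∀ r, IsShortestDipath (E \ {e}) cost x y r →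
      e ∉ pathEdges sp → r = sp := fun e he r hr hne =>
    huniq {e} (Set.singleton_subset_iff.mpr he) x y r sp hr
      (hsp.diff fun ε hε hεe => hne (Set.mem_singleton_iff.mp hεe ▸ hε))
  have shortest_avoiding_sp : ∀ e ∈ pathEdges sp, ∀ r,
      IsShortestDipath (E \ {e}) cost x y r → (∀ ε ∈ pathEdges r, ε ∉ pathEdges sp) →
      IsShortestDipath (E \ S) cost x y r := fun e he r hr hdisj =>
    hr.of_subset (Set.sdiff_subset_sdiff_right (Set.singleton_subset_iff.mpr he))
      (isDipath_diff_iff.mpr ⟨hr.1.mono Set.sdiff_subset, hdisj⟩)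
  by_cases hi : ei ∈ pathEdges sp <;> by_cases hj : ej ∈ pathEdges sp
  · exact huniq S (fun _ hε => hsp.1.mem_of_mem_pathEdges hε) x y p q
      (shortest_avoiding_sp ei hi p hp hpdisj) (shortest_avoiding_sp ej hj q hq hqdisj)
  · exact absurd hi (hqdisj ei (eq_sp ej hej q hq hj ▸ hi))
  · exact absurd hj (hpdisj ej (eq_sp ei hei p hp hi ▸ hj))
  · rw [eq_sp ei hei p hp hi, eq_sp ej hej q hq hj]

/-- let `sp` be the unique shortest path from `x` to `y` in `G`, let `p` be
the unique shortest path from `x` to `y` in `G − ei` and `q` the unique shortest path from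
`x` to `y` in `G − ej`.  If both `p` and `q` are edge-disjoint from `sp`, then `p = q`. -/
theorem stmt6 {V : Type*} [Fintype V] [DecidableEq V]
    (E : Set (V × V)) (cost : V × V → ℝ)
    (hcost : ∀ e ∈ E, 0 ≤ cost e)
    (huniq : ∀ F ⊆ E, ∀ u v : V, ∀ p q : List V,
      IsShortestDipath (E \ F) cost u v p → IsShortestDipath (E \ F) cost u v q → p = q)
    (x y : V) (ei ej : V × V) (hei : ei ∈ E) (hej : ej ∈ E)
    (sp : List V) (hsp : IsShortestDipath E cost x y sp)
    (p q : List V)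
    (hp : IsShortestDipath (E \ {ei}) cost x y p)
    (hq : IsShortestDipath (E \ {ej}) cost x y q)
    (hpdisj : ∀ ε ∈ pathEdges p, ε ∉ pathEdges sp)
    (hqdisj : ∀ ε ∈ pathEdges q, ε ∉ pathEdges sp) :
    p = q :=
  stmt6_general E cost huniq x y ei ej hei hej sp hsp p q hp hq hpdisj hqdisj
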